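/- Let λ_1, …, λ_N ∈ ℝ and let z̃ = Ẽ + iη̃ with η̃ > 0. Suppose there exists a ∈ ℝ, a ≥ 1, such that Im[(1/N) Σ_i 1/(λ_i - Ẽ - i·s)] ≤ a for all s with η̃ ≤ s ≤ 1. Then (1/N) Σ_{i=1}^N 1/|λ_i - z̃| ≤ C(1 + a · log(1/η̃) + a) for some universal constant C, where log denotes the base-2 logarithm (assuming 0 < η̃ < 1). -/

import Mathlib

/-!
Write `1 / |λ - z̃|` through the imaginary parts `s / ((λ - Ẽ)² + s²)` of `1 / (λ - Ẽ - i s)` at the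
dyadic scales `s = 2⁻ⁿ ∈ [η̃, 1]`. If `m = max(|λ - Ẽ|, η̃) ≤ 1`, some dyadic scale lies in `[m, 2m)`,
and there the imaginary part is at least `1 / (5m) ≥ 1 / (5 |λ - z̃|)`; otherwise `1 / |λ - z̃| ≤ 1`.
Averaging over `i` and using the hypothesis at each of the `⌊log₂ (1/η̃)⌋ + 1` scales gives the bound.
-/

open Finset Real

/-- The imaginary part of `1 / (x - i s)`. -/
noncomputable def halfPlanePoisson (x s : ℝ) : ℝ := s / (x ^ 2 + s ^ 2)

lemma halfPlanePoisson_nonneg (x : ℝ) {s : ℝ} (hs : 0 ≤ s) : 0 ≤ halfPlanePoisson x s := by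
  unfold halfPlanePoisson; positivity

lemma im_one_div_ofReal_sub (x E s : ℝ) :
    (1 / ((x : ℂ) - (E + s * Complex.I))).im = halfPlanePoisson (x - E) s := by
  have hre : ((x : ℂ) - (E + s * Complex.I)).re = x - E := by simp
  have him : ((x : ℂ) - (E + s * Complex.I)).im = -s := by simp
  rw [one_div, Complex.inv_im, Complex.normSq_apply, hre, him, halfPlanePoisson]
  ring

lemma inv_le_five_mul_halfPlanePoisson {x m s : ℝ} (hm : 0 < m) (hx : |x| ≤ m) (hms : m ≤ s)
    (hs : s ≤ 2 * m) : m⁻¹ ≤ 5 * halfPlanePoisson x s := by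
  have hx2 : x ^ 2 ≤ m ^ 2 := sq_le_sq' (abs_le.1 hx).1 (abs_le.1 hx).2
  have hs0 : 0 < s := hm.trans_le hms
  rw [inv_eq_one_div, halfPlanePoisson, ← mul_div_assoc, div_le_div_iff₀ hm (by positivity)]
  nlinarith

lemma le_inv_two_pow_iff_le_floor_logb {η : ℝ} (hη : 0 < η) (hη1 : η ≤ 1) (n : ℕ) :
    η ≤ 2⁻¹ ^ n ↔ n ≤ ⌊logb 2 (1 / η)⌋₊ := by
  rw [Nat.le_floor_iff (logb_nonneg one_lt_two (one_le_one_div hη hη1)),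
    le_logb_iff_rpow_le one_lt_two (by positivity), rpow_natCast, le_div_iff₀ hη, inv_pow,
    ← one_div, le_div_iff₀ (by positivity), mul_comm]

lemma exists_inv_two_pow_mem_Ico {η m : ℝ} (hη : 0 < η) (hηm : η ≤ m) (hm : m ≤ 1) :
    ∃ n ≤ ⌊logb 2 (1 / η)⌋₊, m ≤ 2⁻¹ ^ n ∧ 2⁻¹ ^ n < 2 * m := by
  obtain ⟨n, hlt, hle⟩ := exists_nat_pow_near_of_lt_one (hη.trans_le hηm) hm
    (by norm_num : (0 : ℝ) < 2⁻¹) (by norm_num)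
  refine ⟨n, (le_inv_two_pow_iff_le_floor_logb hη (hηm.trans hm) n).1 (hηm.trans hle), hle, ?_⟩
  rw [pow_succ] at hlt
  linarith

lemma inv_max_abs_le_one_add_sum_halfPlanePoisson (x : ℝ) {η : ℝ} (hη : 0 < η) :
    (max |x| η)⁻¹ ≤
      1 + 5 * ∑ n ∈ range (⌊logb 2 (1 / η)⌋₊ + 1), halfPlanePoisson x (2⁻¹ ^ n) := by
  set m := max |x| η
  have hm : 0 < m := hη.trans_le (le_max_right _ _)
  have hsum : 0 ≤ ∑ n ∈ range (⌊logb 2 (1 / η)⌋₊ + 1), halfPlanePoisson x (2⁻¹ ^ n) :=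
    sum_nonneg fun n _ => halfPlanePoisson_nonneg x (by positivity)
  by_cases hm1 : m ≤ 1
  · obtain ⟨n, hn, hmn, hn2⟩ := exists_inv_two_pow_mem_Ico hη (le_max_right _ _) hm1
    have hterm := single_le_sum (f := fun k => halfPlanePoisson x (2⁻¹ ^ k))
      (fun k _ => halfPlanePoisson_nonneg x (by positivity)) (mem_range_succ_iff.2 hn)
    have := inv_le_five_mul_halfPlanePoisson hm (le_max_left _ _) hmn hn2.le
    linarith
  · have : m⁻¹ ≤ 1 := inv_le_one_of_one_le₀ (not_le.1 hm1).le
    linarith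

lemma one_div_norm_le_inv_max_abs (x E : ℝ) {η : ℝ} (hη : 0 < η) :
    1 / ‖(x : ℂ) - (E + η * Complex.I)‖ ≤ (max |x - E| η)⁻¹ := by
  set w := (x : ℂ) - (E + η * Complex.I)
  have hre : |w.re| = |x - E| := by simp [w]
  have him : |w.im| = η := by simp [w, hη.le]
  rw [one_div]
  refine inv_anti₀ (hη.trans_le (le_max_right _ _)) (max_le ?_ ?_)
  · exact hre ▸ Complex.abs_re_le_norm w
  · exact him ▸ Complex.abs_im_le_norm w

lemma average_im_one_div_sub {ι : Type*} [Fintype ι] (lam : ι → ℝ) (E s : ℝ) :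
    ((1 / (Fintype.card ι : ℂ)) * ∑ i, 1 / ((lam i : ℂ) - (E + s * Complex.I))).im =
      (1 / (Fintype.card ι : ℝ)) * ∑ i, halfPlanePoisson (lam i - E) s := by
  rw [show (1 / (Fintype.card ι : ℂ)) = ((1 / (Fintype.card ι : ℝ) : ℝ) : ℂ) by push_cast; rfl,
    Complex.im_ofReal_mul, Complex.im_sum]
  simp only [im_one_div_ofReal_sub]

lemma average_one_div_norm_le {ι : Type*} [Fintype ι] (lam : ι → ℝ) (E : ℝ) {η a : ℝ} (hη : 0 < η)
    (h : ∀ n ≤ ⌊logb 2 (1 / η)⌋₊,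
      (1 / (Fintype.card ι : ℝ)) * ∑ i, halfPlanePoisson (lam i - E) (2⁻¹ ^ n) ≤ a) :
    (1 / (Fintype.card ι : ℝ)) * ∑ i, 1 / ‖(lam i : ℂ) - (E + η * Complex.I)‖ ≤
      1 + 5 * ((⌊logb 2 (1 / η)⌋₊ + 1) * a) := by
  set K := ⌊logb 2 (1 / η)⌋₊
  set c := 1 / (Fintype.card ι : ℝ)
  have hcard : c * Fintype.card ι ≤ 1 := by
    rcases (Fintype.card ι).eq_zero_or_pos with h0 | hpos
    · simp [c, h0]
    · simp [c, (Nat.cast_pos.2 hpos).ne']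
  calc c * ∑ i, 1 / ‖(lam i : ℂ) - (E + η * Complex.I)‖
      ≤ c * ∑ i, (1 + 5 * ∑ n ∈ range (K + 1), halfPlanePoisson (lam i - E) (2⁻¹ ^ n)) := by
        gcongr with i
        exact (one_div_norm_le_inv_max_abs _ _ hη).trans
          (inv_max_abs_le_one_add_sum_halfPlanePoisson _ hη)
    _ = c * Fintype.card ι +
          5 * ∑ n ∈ range (K + 1), c * ∑ i, halfPlanePoisson (lam i - E) (2⁻¹ ^ n) := by
        rw [sum_add_distrib, ← mul_sum, sum_comm, mul_add, mul_left_comm, mul_sum (range (K + 1))]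
        simp [mul_comm]
    _ ≤ 1 + 5 * ∑ _n ∈ range (K + 1), a := by
        gcongr with n hn
        exact h n (mem_range_succ_iff.1 hn)
    _ = 1 + 5 * ((K + 1) * a) := by simp

/-- Dyadic decomposition estimate for the sum of moduli of resolvent kernels. -/
theorem dyadic_resolvent_sum_bound :
    ∃ C : ℝ, 0 < C ∧
      ∀ (N : ℕ) (lam : Fin N → ℝ) (Etil ηtil a : ℝ),
        0 < ηtil → ηtil < 1 → 1 ≤ a →
        (∀ s : ℝ, ηtil ≤ s → s ≤ 1 →
          ((1 / (N : ℂ)) * ∑ i, 1 / ((lam i : ℂ) - (Etil + s * Complex.I))).im ≤ a) →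
        (1 / (N : ℝ)) * ∑ i, 1 / ‖(lam i : ℂ) - (Etil + ηtil * Complex.I)‖
          ≤ C * (1 + a * Real.logb 2 (1 / ηtil) + a) := by
  refine ⟨5, by norm_num, fun N lam E η a hη hη1 ha hyp => ?_⟩
  have hscales : ∀ n ≤ ⌊logb 2 (1 / η)⌋₊,
      (1 / (N : ℝ)) * ∑ i, halfPlanePoisson (lam i - E) (2⁻¹ ^ n) ≤ a := by
    intro n hn
    have haverage := average_im_one_div_sub lam E (2⁻¹ ^ n)
    rw [Fintype.card_fin] at haverage
    exact haverage ▸ hyp _ ((le_inv_two_pow_iff_le_floor_logb hη hη1.le n).2 hn)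
      (pow_le_one₀ (by norm_num) (by norm_num))
  have hK : (⌊logb 2 (1 / η)⌋₊ : ℝ) ≤ logb 2 (1 / η) :=
    Nat.floor_le (logb_nonneg one_lt_two (one_le_one_div hη hη1.le))
  have hbound := average_one_div_norm_le lam E hη (by simpa only [Fintype.card_fin] using hscales)
  rw [Fintype.card_fin] at hbound
  have hKa := mul_le_mul_of_nonneg_right hK (zero_le_one.trans ha)
  linarith
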